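/- arXiv:1908.11819 — 2 statements merged into one kernel-verified Lean document; each statement's English description precedes it below -/
import Mathlib

section
/- Let A be an array of integers in [0, 2^k) of length n. Define for each t ∈ {1,...,k} arrays A_t of length 2n by: A_t[i] = p_{t−1}(A[i]) if v_t(A[i]) = 1 else −∞, and A_t[n+i] = p_{t−1}(A[i]) if v_t(A[i]) = 0 else +∞ (where −∞ and +∞ are two distinct sentinel values not of the form p_{t−1}(x)). Then for all a ≤ b < c ≤ d, inv_A([a,b],[c,d]) = Σ_{t=1}^{k} eqp_{A_t}([a,b],[n+c,n+d]). -/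
open Finset

/-- The array `A_t` of length `2n` (indices `0,…,2n-1`): position `i < n` holds
`p_{t-1}(A[i])` if the `t`-th most significant bit of `A[i]` is `1`, else the
sentinel `-∞` (modelled as `-1`); position `n+i` holds `p_{t-1}(A[i])` if that
bit is `0`, else the sentinel `+∞` (modelled as `-2`).  The sentinels are
distinct from each other and from every value `p_{t-1}(x) ≥ 0`. -/
def auxArray (n k : ℕ) (A : ℕ → ℕ) (t : ℕ) (i : ℕ) : ℤ :=
  if i < n then
    (if A i / 2 ^ (k - t) % 2 = 1 then ((A i / 2 ^ (k - t + 1) : ℕ) : ℤ) else -1)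
  else
    (if A (i - n) / 2 ^ (k - t) % 2 = 0 then ((A (i - n) / 2 ^ (k - t + 1) : ℕ) : ℤ) else -2)

/-!
For `y < x` there is exactly one bit position `s` at which `x` has a `1`, `y` has a `0` and
the two agree on all higher bits: the most significant bit where they differ, which lies
below `k` when `x < 2 ^ k`. For `y ≥ x` there is none. Since `A_t[i] = A_t[n+j]` holds
exactly when bit `k - t` is such a position for `A[i]` and `A[j]` (the sentinels never
match anything), summing over `t` counts each pair `(i, j)` with `A[j] < A[i]` exactly once.
-/

namespace Nat

def SplitsAt (x y s : ℕ) : Prop :=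
  x.testBit s = true ∧ y.testBit s = false ∧ ∀ j, s < j → x.testBit j = y.testBit j

variable {x y s : ℕ}

theorem splitsAt_iff_div :
    SplitsAt x y s ↔
      x / 2 ^ s % 2 = 1 ∧ y / 2 ^ s % 2 = 0 ∧ x / 2 ^ (s + 1) = y / 2 ^ (s + 1) := by
  have high_eq :
      (∀ j, s < j → x.testBit j = y.testBit j) ↔ x / 2 ^ (s + 1) = y / 2 ^ (s + 1) := by
    simp only [← shiftRight_eq_div_pow]
    refine ⟨fun h => eq_of_testBit_eq fun j => ?_, fun h j hj => ?_⟩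
    · simpa only [testBit_shiftRight] using h _ (by omega)
    · simpa only [testBit_shiftRight, Nat.add_sub_cancel' hj] using
        congrArg (testBit · (j - (s + 1))) h
  rw [SplitsAt, high_eq]
  simp only [testBit_eq_decide_div_mod_eq, decide_eq_true_eq, decide_eq_false_iff_not]
  omega

theorem SplitsAt.lt (h : SplitsAt x y s) : y < x :=
  lt_of_testBit s h.2.1 h.1 fun j hj => (h.2.2 j hj).symm

theorem SplitsAt.unique {s' : ℕ} (h : SplitsAt x y s) (h' : SplitsAt x y s') : s = s' := by
  by_contra hne
  rcases lt_or_gt_of_ne hne with hlt | hlt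
  · simpa [h'.1, h'.2.1] using h.2.2 s' hlt
  · simpa [h.1, h.2.1] using h'.2.2 s hlt

theorem SplitsAt.lt_of_lt_two_pow {k : ℕ} (h : SplitsAt x y s) (hx : x < 2 ^ k) : s < k := by
  by_contra! hks
  simpa [testBit_lt_two_pow (hx.trans_le (pow_le_pow_right₀ one_le_two hks))] using h.1

theorem exists_splitsAt_of_lt (hyx : y < x) : ∃ s, SplitsAt x y s := by
  obtain ⟨s, hs, hhigh⟩ := exists_most_significant_bit (n := x ^^^ y) fun h0 =>
    hyx.ne' (xor_eq_zero_iff.1 h0)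
  have agree : ∀ j, s < j → x.testBit j = y.testBit j := fun j hj => by
    simpa [testBit_xor] using hhigh j hj
  have differ : x.testBit s ≠ y.testBit s := by simpa [testBit_xor] using hs
  have not_reversed : ¬(x.testBit s = false ∧ y.testBit s = true) := fun ⟨hxs, hys⟩ =>
    hyx.not_gt (lt_of_testBit s hxs hys agree)
  refine ⟨s, ?_, ?_, agree⟩ <;> revert differ not_reversed <;>
    cases x.testBit s <;> cases y.testBit s <;> simp

open Classical in
theorem card_filter_splitsAt {k : ℕ} (hx : x < 2 ^ k) :
    ((range k).filter (SplitsAt x y)).card = if y < x then 1 else 0 := by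
  split_ifs with hyx
  · obtain ⟨s, hs⟩ := exists_splitsAt_of_lt hyx
    rw [Finset.card_eq_one]
    refine ⟨s, eq_singleton_iff_unique_mem.2 ⟨?_, fun s' hs' => ?_⟩⟩
    · exact mem_filter.2 ⟨mem_range.2 (hs.lt_of_lt_two_pow hx), hs⟩
    · exact (mem_filter.1 hs').2.unique hs
  · exact Finset.card_eq_zero.2 (filter_eq_empty_iff.2 fun s _ hs => hyx hs.lt)

end Nat

theorem auxArray_eq_iff {n k : ℕ} {A : ℕ → ℕ} {t i : ℕ} (j : ℕ) (hi : i < n) :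
    auxArray n k A t i = auxArray n k A t (n + j) ↔ Nat.SplitsAt (A i) (A j) (k - t) := by
  rw [Nat.splitsAt_iff_div, auxArray, auxArray, if_pos hi, if_neg (n.le_add_right j).not_gt,
    Nat.add_sub_cancel_left]
  split_ifs <;> simp_all [-Int.natCast_ediv]

open Classical in
theorem sum_auxArray_eq_indicator {n k : ℕ} {A : ℕ → ℕ} {i : ℕ} (j : ℕ) (hi : i < n)
    (hA : A i < 2 ^ k) :
    (∑ t ∈ Icc 1 k, if auxArray n k A t i = auxArray n k A t (n + j) then 1 else 0) =
      if A j < A i then 1 else 0 := by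
  simp only [auxArray_eq_iff j hi]
  rw [← Nat.card_filter_splitsAt hA, card_filter, ← Ico_add_one_right_eq_Icc,
    sum_Ico_reflect (fun s => if Nat.SplitsAt (A i) (A j) s then 1 else 0) 1 le_rfl]
  simp [Nat.Ico_zero_eq_range]

theorem stmt_4_general (n k : ℕ) (A : ℕ → ℕ) (hA : ∀ i, A i < 2 ^ k)
    (a b c d : ℕ) (hbc : b < c) (hdn : d < n) :
    ((Finset.Icc a b ×ˢ Finset.Icc c d).filter (fun p => A p.2 < A p.1)).card =
      ∑ t ∈ Finset.Icc 1 k,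
        ((Finset.Icc a b ×ˢ Finset.Icc (n + c) (n + d)).filter
          (fun p => auxArray n k A t p.1 = auxArray n k A t p.2)).card := by
  have shift : Icc a b ×ˢ Icc (n + c) (n + d) =
      (Icc a b ×ˢ Icc c d).map ((Function.Embedding.refl ℕ).prodMap (addLeftEmbedding n)) := by
    rw [prodMap_map_product, map_refl, map_add_left_Icc]
  simp only [shift, filter_map, card_map, card_filter]
  rw [sum_comm]
  refine sum_congr rfl fun p hp => ?_
  simp only [mem_product, mem_Icc] at hp
  exact (sum_auxArray_eq_indicator p.2 (by omega) (hA p.1)).symm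

theorem stmt_4 (n k : ℕ) (A : ℕ → ℕ) (hA : ∀ i, A i < 2 ^ k)
    (a b c d : ℕ) (hab : a ≤ b) (hbc : b < c) (hcd : c ≤ d) (hdn : d < n) :
    ((Finset.Icc a b ×ˢ Finset.Icc c d).filter (fun p => A p.2 < A p.1)).card =
      ∑ t ∈ Finset.Icc 1 k,
        ((Finset.Icc a b ×ˢ Finset.Icc (n + c) (n + d)).filter
          (fun p => auxArray n k A t p.1 = auxArray n k A t p.2)).card :=
  stmt_4_general n k A hA a b c d hbc hdn
end

section
/- Mo's ordering cost bound: Let (l₁,r₁),...,(l_q,r_q) be pairs with 1 ≤ l_i ≤ r_i ≤ n, sorted so that ⌊l_i/B⌋ is nondecreasing and, within equal values of ⌊l_i/B⌋, r_i is nondecreasing (for some integer B ≥ 1). Then Σ_{i=2}^q |l_i − l_{i−1}| ≤ n + 2·B·(q−1) and Σ_{i=2}^q |r_i − r_{i−1}| ≤ (⌈n/B⌉ + 1)·n. -/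
open Finset

/-
Let b_i = ⌊l_i/B⌋. Both sums are bounded by the net change plus twice the total descent. Since b is
nondecreasing, l can drop by less than B at each step, giving the first bound. Within a block r does
not decrease, and when b jumps to a new value v we have r_i ≥ l_i ≥ Bv, so r drops by at most n - Bv.
Different jumps land on different values v ∈ [1, ⌊n/B⌋], and 2·Σ_{v ≤ ⌊n/B⌋} (n - Bv) ≤ ⌊n/B⌋·n
because n < B(⌊n/B⌋ + 1).
-/
theorem Finset.sum_Icc_two_sub_pred {G : Type*} [AddCommGroup G] (f : ℕ → G) {q : ℕ}
    (hq : 1 ≤ q) : ∑ i ∈ Icc 2 q, (f i - f (i - 1)) = f q - f 1 := by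
  rw [← Ico_add_one_right_eq_Icc, ← sum_Ico_add' _ 1 q 1]
  simpa using sum_Ico_sub f hq

theorem Finset.sum_abs_sub_pred_le (f c : ℕ → ℤ) {q : ℕ} (hq : 1 ≤ q)
    (hc : ∀ i ∈ Icc 2 q, 0 ≤ c i) (hdrop : ∀ i ∈ Icc 2 q, f (i - 1) - f i ≤ c i) :
    ∑ i ∈ Icc 2 q, |f i - f (i - 1)| ≤ f q - f 1 + 2 * ∑ i ∈ Icc 2 q, c i := by
  calc ∑ i ∈ Icc 2 q, |f i - f (i - 1)|
      ≤ ∑ i ∈ Icc 2 q, (f i - f (i - 1) + 2 * c i) :=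
        sum_le_sum fun i hi ↦ abs_le.2 ⟨by linarith [hdrop i hi], by linarith [hc i hi]⟩
    _ = f q - f 1 + 2 * ∑ i ∈ Icc 2 q, c i := by
        rw [sum_add_distrib, sum_Icc_two_sub_pred f hq, mul_sum]

theorem Nat.lt_add_of_div_le_div {a b B : ℕ} (hB : 0 < B) (h : a / B ≤ b / B) : a < b + B :=
  calc a < B * (a / B + 1) := Nat.lt_mul_div_succ a hB
    _ ≤ B * (b / B + 1) := Nat.mul_le_mul_left B (Nat.succ_le_succ h)
    _ = B * (b / B) + B := Nat.mul_succ B _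
    _ ≤ b + B := Nat.add_le_add_right (Nat.mul_div_le b B) B

section BlockChanges

variable {α : Type*} [PartialOrder α] {b : ℕ → α} {q : ℕ}

theorem MonotoneOn.lt_of_lt_of_ne_pred (hb : MonotoneOn b (Set.Icc 1 q)) {i j : ℕ}
    (hi : 1 ≤ i) (hj : j ≤ q) (hij : i < j) (hjne : b (j - 1) ≠ b j) : b i < b j := by
  have hle : b i ≤ b (j - 1) := hb ⟨hi, by omega⟩ ⟨by omega, by omega⟩ (by omega)
  have hstep : b (j - 1) ≤ b j := hb ⟨by omega, by omega⟩ ⟨by omega, hj⟩ (by omega)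
  exact hle.trans_lt (hstep.lt_of_ne hjne)

theorem MonotoneOn.injOn_filter_ne_pred [DecidableEq α] (hb : MonotoneOn b (Set.Icc 1 q)) :
    Set.InjOn b ↑({i ∈ Icc 2 q | b (i - 1) ≠ b i} : Finset ℕ) := by
  intro i hi j hj hij
  simp only [coe_filter, mem_Icc, Set.mem_ofPred_eq] at hi hj
  by_contra hne
  rcases Nat.lt_or_gt_of_ne hne with h | h
  · exact (hb.lt_of_lt_of_ne_pred (by omega) hj.1.2 h hj.2).ne hij
  · exact (hb.lt_of_lt_of_ne_pred (by omega) hi.1.2 h hi.2).ne hij.symm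

end BlockChanges

theorem Finset.sum_filter_ne_pred_le_sum_Icc {β : Type*} [AddCommMonoid β] [PartialOrder β]
    [IsOrderedAddMonoid β] {b : ℕ → ℕ} {q M : ℕ} (g : ℕ → β)
    (hb : MonotoneOn b (Set.Icc 1 q)) (hbM : ∀ i ∈ Icc 2 q, b i ≤ M)
    (hg : ∀ v ∈ Icc 1 M, 0 ≤ g v) :
    ∑ i ∈ Icc 2 q with b (i - 1) ≠ b i, g (b i) ≤ ∑ v ∈ Icc 1 M, g v := by
  rw [← sum_image hb.injOn_filter_ne_pred]
  refine sum_le_sum_of_subset_of_nonneg ?_ fun v hv _ ↦ hg v hv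
  intro v hv
  obtain ⟨i, hi, rfl⟩ := mem_image.1 hv
  obtain ⟨hiq, hine⟩ := mem_filter.1 hi
  have hiq' := mem_Icc.1 hiq
  have : b (i - 1) ≤ b i := hb ⟨by omega, by omega⟩ ⟨by omega, hiq'.2⟩ (by omega)
  exact mem_Icc.2 ⟨by omega, hbM i hiq⟩

theorem two_mul_sum_Icc_sub_mul_le {n B : ℤ} {M : ℕ} (hn : n ≤ B * (M + 1)) :
    2 * ∑ v ∈ Icc 1 M, (n - B * v) ≤ M * n := by
  have gauss : 2 * ∑ v ∈ Icc 1 M, (v : ℤ) = M * (M + 1) := by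
    have h := sum_range_id_mul_two (M + 1)
    rw [range_eq_Ico, sum_eq_sum_Ico_succ_bot (by omega), Ico_add_one_right_eq_Icc,
      zero_add, add_tsub_cancel_right] at h
    rw [← Nat.cast_sum]
    exact_mod_cast (by linarith : 2 * ∑ v ∈ Icc 1 M, v = M * (M + 1))
  rw [sum_sub_distrib, ← mul_sum, sum_const, Nat.card_Icc, nsmul_eq_mul]
  push_cast
  linear_combination (M : ℤ) * hn - B * gauss

section MoOrdering

variable {n q B : ℕ} {l r : ℕ → ℕ}

theorem mo_order_left_cost_le (hq : 1 ≤ q) (hB : 0 < B) (hlq : l q ≤ n)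
    (hblock : MonotoneOn (fun i ↦ l i / B) (Set.Icc 1 q)) :
    ∑ i ∈ Icc 2 q, |(l i : ℤ) - l (i - 1)| ≤ n + 2 * B * (q - 1) := by
  have hdrop : ∀ i ∈ Icc 2 q, (l (i - 1) : ℤ) - l i ≤ B := by
    intro i hi
    have hi := mem_Icc.1 hi
    have := Nat.lt_add_of_div_le_div hB
      (hblock ⟨by omega, by omega⟩ ⟨by omega, hi.2⟩ (by omega) : l (i - 1) / B ≤ l i / B)
    omega
  calc ∑ i ∈ Icc 2 q, |(l i : ℤ) - l (i - 1)|
      ≤ l q - l 1 + 2 * ∑ i ∈ Icc 2 q, (B : ℤ) :=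
        sum_abs_sub_pred_le _ _ hq (fun _ _ ↦ by positivity) hdrop
    _ ≤ n + 2 * B * (q - 1) := by
        rw [sum_const, Nat.card_Icc, nsmul_eq_mul, Nat.cast_sub (by omega)]
        push_cast
        linarith [(Nat.cast_le (α := ℤ)).2 hlq, Int.natCast_nonneg (l 1)]

theorem mo_order_right_cost_le (hq : 1 ≤ q) (hB : 0 < B)
    (hlr : ∀ i ∈ Icc 1 q, l i ≤ r i) (hrn : ∀ i ∈ Icc 1 q, r i ≤ n)
    (hblock : MonotoneOn (fun i ↦ l i / B) (Set.Icc 1 q))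
    (hsortr : ∀ i ∈ Icc 2 q, l (i - 1) / B = l i / B → r (i - 1) ≤ r i) :
    ∑ i ∈ Icc 2 q, |(r i : ℤ) - r (i - 1)| ≤ ((n / B : ℕ) + 1 : ℤ) * n := by
  set b : ℕ → ℕ := fun i ↦ l i / B
  have hsub : Icc 2 q ⊆ Icc 1 q := Icc_subset_Icc_left (by norm_num)
  have hBb : ∀ i ∈ Icc 1 q, B * b i ≤ r i := fun i hi ↦ (Nat.mul_div_le (l i) B).trans (hlr i hi)
  have hbn : ∀ i ∈ Icc 1 q, b i ≤ n / B := fun i hi ↦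
    Nat.div_le_div_right ((hlr i hi).trans (hrn i hi))
  set c : ℕ → ℤ := fun i ↦ if b (i - 1) ≠ b i then (n : ℤ) - B * b i else 0 with hc
  have hBv : ∀ v ≤ n / B, (B : ℤ) * v ≤ n := fun v hv ↦ by
    exact_mod_cast (Nat.mul_le_mul_left B hv).trans (Nat.mul_div_le n B)
  have hc_nonneg : ∀ i ∈ Icc 2 q, 0 ≤ c i := by
    intro i hi
    have := hBv (b i) (hbn i (hsub hi))
    simp only [hc]
    split_ifs <;> linarith
  have hdrop : ∀ i ∈ Icc 2 q, (r (i - 1) : ℤ) - r i ≤ c i := by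
    intro i hi
    have hi' := mem_Icc.1 hi
    simp only [hc]
    split_ifs with hchange
    · have h1 : (r (i - 1) : ℤ) ≤ n := by exact_mod_cast hrn (i - 1) (by simp; omega)
      have h2 : (B : ℤ) * b i ≤ r i := by exact_mod_cast hBb i (hsub hi)
      linarith
    · have := hsortr i hi (not_not.1 hchange)
      omega
  have hchanges : 2 * ∑ i ∈ Icc 2 q, c i ≤ (n / B : ℕ) * n := by
    rw [← sum_filter]
    have hn : (n : ℤ) ≤ B * ((n / B : ℕ) + 1) := by exact_mod_cast (Nat.lt_mul_div_succ n hB).le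
    calc 2 * ∑ i ∈ Icc 2 q with b (i - 1) ≠ b i, ((n : ℤ) - B * b i)
        ≤ 2 * ∑ v ∈ Icc 1 (n / B), ((n : ℤ) - B * v) := by
          gcongr
          exact sum_filter_ne_pred_le_sum_Icc (fun v ↦ (n : ℤ) - B * v) hblock
            (fun i hi ↦ hbn i (hsub hi)) fun v hv ↦ sub_nonneg.2 (hBv v (mem_Icc.1 hv).2)
      _ ≤ (n / B : ℕ) * n := two_mul_sum_Icc_sub_mul_le hn
  calc ∑ i ∈ Icc 2 q, |(r i : ℤ) - r (i - 1)|
      ≤ r q - r 1 + 2 * ∑ i ∈ Icc 2 q, c i := sum_abs_sub_pred_le _ _ hq hc_nonneg hdrop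
    _ ≤ n + (n / B : ℕ) * n := by
        gcongr
        have := hrn q (by simp [hq])
        omega
    _ = ((n / B : ℕ) + 1 : ℤ) * n := by ring

end MoOrdering

theorem stmt_18_general (n q B : ℕ) (hq : 1 ≤ q) (hB : 1 ≤ B)
    (l r : ℕ → ℕ)
    (hbound : ∀ i, 1 ≤ i → i ≤ q → 1 ≤ l i ∧ l i ≤ r i ∧ r i ≤ n)
    (hsortl : ∀ i, 1 ≤ i → i < q → l i / B ≤ l (i + 1) / B)
    (hsortr : ∀ i, 1 ≤ i → i < q → l i / B = l (i + 1) / B → r i ≤ r (i + 1)) :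
    (∑ i ∈ Finset.Icc 2 q, |(l i : ℤ) - (l (i - 1) : ℤ)|)
        ≤ (n : ℤ) + 2 * B * (q - 1) ∧
    (∑ i ∈ Finset.Icc 2 q, |(r i : ℤ) - (r (i - 1) : ℤ)|)
        ≤ (((n + B - 1) / B : ℕ) + 1 : ℤ) * n := by
  have hlr : ∀ i ∈ Icc 1 q, l i ≤ r i := fun i hi ↦ (hbound i (mem_Icc.1 hi).1 (mem_Icc.1 hi).2).2.1
  have hrn : ∀ i ∈ Icc 1 q, r i ≤ n := fun i hi ↦ (hbound i (mem_Icc.1 hi).1 (mem_Icc.1 hi).2).2.2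
  have hblock : MonotoneOn (fun i ↦ l i / B) (Set.Icc 1 q) :=
    monotoneOn_of_le_succ Set.ordConnected_Icc fun i _ hi hsi ↦
      hsortl i hi.1 (by simpa using hsi.2)
  have hsortr' : ∀ i ∈ Icc 2 q, l (i - 1) / B = l i / B → r (i - 1) ≤ r i := fun i hi ↦ by
    obtain ⟨hi2, hiq⟩ := mem_Icc.1 hi
    obtain ⟨j, rfl⟩ : ∃ j, i = j + 1 := ⟨i - 1, by omega⟩
    simpa using hsortr j (by omega) (by omega)
  have hq_mem : q ∈ Icc 1 q := mem_Icc.2 ⟨hq, le_rfl⟩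
  refine ⟨mo_order_left_cost_le hq hB ((hlr q hq_mem).trans (hrn q hq_mem)) hblock, ?_⟩
  calc _ ≤ ((n / B : ℕ) + 1 : ℤ) * n := mo_order_right_cost_le hq hB hlr hrn hblock hsortr'
    _ ≤ _ := by gcongr; omega

theorem stmt_18 (n q B : ℕ) (hn : 1 ≤ n) (hq : 1 ≤ q) (hB : 1 ≤ B)
    (l r : ℕ → ℕ)
    (hbound : ∀ i, 1 ≤ i → i ≤ q → 1 ≤ l i ∧ l i ≤ r i ∧ r i ≤ n)
    (hsortl : ∀ i, 1 ≤ i → i < q → l i / B ≤ l (i + 1) / B)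
    (hsortr : ∀ i, 1 ≤ i → i < q → l i / B = l (i + 1) / B → r i ≤ r (i + 1)) :
    (∑ i ∈ Finset.Icc 2 q, |(l i : ℤ) - (l (i - 1) : ℤ)|)
        ≤ (n : ℤ) + 2 * B * (q - 1) ∧
    (∑ i ∈ Finset.Icc 2 q, |(r i : ℤ) - (r (i - 1) : ℤ)|)
        ≤ (((n + B - 1) / B : ℕ) + 1 : ℤ) * n :=
  stmt_18_general n q B hq hB l r hbound hsortl hsortr
end
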